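/- arXiv:1711.06390 — 3 statements merged into one kernel-verified Lean document; each statement's English description precedes it below -/
import Mathlib

section
/- Let x, z ∈ ℝ^N with x_{(ℓ)} ≤ z_{(ℓ)} for all ℓ (increasing rearrangements). Fix i ∈ {1,...,N} and Z ∈ ℝ. Define x' from x by replacing the minimal coordinate of x with max(xᵢ + Z, min x), and z' from z by replacing the minimal coordinate of z with max(zᵢ + Z, min z), where the index i refers to the i-th coordinate in the increasing order. Then x'_{(ℓ)} ≤ z'_{(ℓ)} for all ℓ. -/
/-- Pointwise comparison implies comparison of sorted rearrangements. -/
lemma sorted_le_sorted {n : ℕ} (f g : Fin n → ℝ) (hfg : ∀ j, f j ≤ g j) :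
    ∀ ℓ, f (Tuple.sort f ℓ) ≤ g (Tuple.sort g ℓ) := by
  intro ℓ
  set σ := Tuple.sort f
  set τ := Tuple.sort g
  -- the set of indices j with ℓ ≤ σ.symm (τ j) for some j ≤ ℓ
  have hcard : (Finset.Iic ℓ).card = (ℓ : ℕ) + 1 := by
    simp [Fin.card_Iic]
  set A : Finset (Fin n) := (Finset.Iic ℓ).image (fun k => σ.symm (τ k)) with hA
  have hAcard : A.card = (ℓ : ℕ) + 1 := by
    rw [hA, Finset.card_image_of_injective _ (fun a b hab => τ.injective (σ.symm.injective hab))]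
    exact hcard
  have : ∃ m ∈ A, ℓ ≤ m := by
    by_contra hcon
    push_neg at hcon
    have hsub : A ⊆ Finset.Iio ℓ := fun m hm => Finset.mem_Iio.mpr (hcon m hm)
    have := Finset.card_le_card hsub
    rw [hAcard, Fin.card_Iio] at this
    omega
  obtain ⟨m, hmA, hlm⟩ := this
  obtain ⟨k, hk, hkm⟩ := Finset.mem_image.mp hmA
  have h1 : f (σ ℓ) ≤ f (σ m) := Tuple.monotone_sort f hlm
  have h2 : f (σ m) ≤ g (σ m) := hfg _
  have h3 : σ m = τ k := by rw [← hkm]; simp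
  have h4 : g (τ k) ≤ g (τ ℓ) := Tuple.monotone_sort g (Finset.mem_Iic.mp hk)
  have h2' : f (σ m) ≤ g (τ k) := by rw [← h3]; exact h2
  exact h1.trans (h2'.trans h4)

/-- Replacing the minimal coordinate by `max (x_{(i)} + Z, min x)` (the same
branching rule in both configurations) preserves the coordinatewise order of the
increasing rearrangements. -/
theorem stmt_4 {N : ℕ} (x z : Fin (N + 1) → ℝ) (i : Fin (N + 1)) (Z : ℝ)
    (h : ∀ ℓ : Fin (N + 1), x (Tuple.sort x ℓ) ≤ z (Tuple.sort z ℓ))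
    (x' z' : Fin (N + 1) → ℝ)
    (hx' : x' = Function.update (x ∘ Tuple.sort x) 0
      (max ((x ∘ Tuple.sort x) i + Z) ((x ∘ Tuple.sort x) 0)))
    (hz' : z' = Function.update (z ∘ Tuple.sort z) 0
      (max ((z ∘ Tuple.sort z) i + Z) ((z ∘ Tuple.sort z) 0))) :
    ∀ ℓ : Fin (N + 1), x' (Tuple.sort x' ℓ) ≤ z' (Tuple.sort z' ℓ) := by
  apply sorted_le_sorted
  intro j
  rw [hx', hz']
  rcases eq_or_ne j 0 with rfl | hj
  · simp only [Function.update_self]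
    exact max_le_max (add_le_add_left (h i) Z) (h 0)
  · simp only [Function.update_of_ne hj]
    exact h j
end

section
/- Let f, g be nonnegative functions in L¹(ℝ) with ∫f = ∫g = a, and let 0 < Θ < a. Let f'' = 1_{x ≥ V_f} f and g'' = 1_{x ≥ V_g} g be obtained by cutting mass Θ from the left of f and g respectively (so ∫f'' = ∫g'' = a - Θ). Then ‖f'' - g''‖_{L¹} ≤ ‖f - g‖_{L¹}. -/
open MeasureTheory

lemma stmt_6_aux (f g : ℝ → ℝ) (a Θ Vf Vg : ℝ)
    (hf_int : Integrable f) (hg_int : Integrable g)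
    (hf_nonneg : ∀ x, 0 ≤ f x)
    (hfa : ∫ x, f x = a) (hga : ∫ x, g x = a)
    (hVf : ∫ x in Set.Ici Vf, f x = a - Θ)
    (hVg : ∫ x in Set.Ici Vg, g x = a - Θ)
    (hle : Vf ≤ Vg) :
    ∫ x, |(Set.Ici Vf).indicator f x - (Set.Ici Vg).indicator g x|
      ≤ ∫ x, |f x - g x| := by
  set F := (Set.Ici Vf).indicator f with hF
  set G := (Set.Ici Vg).indicator g with hG
  have hFint : Integrable F := hf_int.indicator measurableSet_Ici
  have hGint : Integrable G := hg_int.indicator measurableSet_Ici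
  have hFG : Integrable (fun x => |F x - G x|) := (hFint.sub hGint).abs
  have hfg : Integrable (fun x => |f x - g x|) := (hf_int.sub hg_int).abs
  -- split both sides at Vg
  have hsplitL : ∫ x, |F x - G x|
      = (∫ x in Set.Iio Vg, |F x - G x|) + ∫ x in Set.Ici Vg, |F x - G x| :=
    (intervalIntegral.integral_Iio_add_Ici hFG.integrableOn hFG.integrableOn).symm
  have hsplitR : ∫ x, |f x - g x|
      = (∫ x in Set.Iio Vg, |f x - g x|) + ∫ x in Set.Ici Vg, |f x - g x| :=
    (intervalIntegral.integral_Iio_add_Ici hfg.integrableOn hfg.integrableOn).symm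
  -- on Ici Vg the integrands agree
  have hIci : ∫ x in Set.Ici Vg, |F x - G x| = ∫ x in Set.Ici Vg, |f x - g x| := by
    refine setIntegral_congr_fun measurableSet_Ici fun x hx => ?_
    have hx' : Vf ≤ x := le_trans hle hx
    simp [hF, hG, Set.indicator_of_mem, hx, Set.mem_Ici.mpr hx']
  -- on Iio Vg the left integrand is F
  have hIio : ∫ x in Set.Iio Vg, |F x - G x| = ∫ x in Set.Iio Vg, F x := by
    refine setIntegral_congr_fun measurableSet_Iio fun x hx => ?_
    have hGx : G x = 0 := Set.indicator_of_notMem (by simpa using not_le.mpr hx) g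
    have hFx : 0 ≤ F x := Set.indicator_nonneg (fun y _ => hf_nonneg y) x
    rw [hGx, sub_zero, abs_of_nonneg hFx]
  -- compute ∫_{Iio Vg} F
  have hFtot : ∫ x, F x = a - Θ := by
    rw [hF, integral_indicator measurableSet_Ici]; exact hVf
  have hFIci : ∫ x in Set.Ici Vg, F x = ∫ x in Set.Ici Vg, f x := by
    refine setIntegral_congr_fun measurableSet_Ici fun x hx => ?_
    exact Set.indicator_of_mem (Set.mem_Ici.mpr (le_trans hle hx)) f
  have hFsplit : (∫ x in Set.Iio Vg, F x) + ∫ x in Set.Ici Vg, F x = ∫ x, F x :=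
    intervalIntegral.integral_Iio_add_Ici hFint.integrableOn hFint.integrableOn
  have hfsplit : (∫ x in Set.Iio Vg, f x) + ∫ x in Set.Ici Vg, f x = ∫ x, f x :=
    intervalIntegral.integral_Iio_add_Ici hf_int.integrableOn hf_int.integrableOn
  have hgsplit : (∫ x in Set.Iio Vg, g x) + ∫ x in Set.Ici Vg, g x = ∫ x, g x :=
    intervalIntegral.integral_Iio_add_Ici hg_int.integrableOn hg_int.integrableOn
  -- ∫_{Iio Vg} F = ∫_{Iio Vg} f - ∫_{Iio Vg} g
  have hkey : ∫ x in Set.Iio Vg, F x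
      = (∫ x in Set.Iio Vg, f x) - ∫ x in Set.Iio Vg, g x := by
    have h1 : ∫ x in Set.Iio Vg, F x = (a - Θ) - ∫ x in Set.Ici Vg, f x := by
      rw [← hFIci]; linarith [hFsplit, hFtot]
    rw [h1, ← hVg]
    rw [hfa] at hfsplit; rw [hga] at hgsplit
    linarith
  have hbound : ∫ x in Set.Iio Vg, F x ≤ ∫ x in Set.Iio Vg, |f x - g x| := by
    rw [hkey, ← integral_sub hf_int.integrableOn hg_int.integrableOn]
    exact integral_mono (hf_int.integrableOn.sub hg_int.integrableOn) hfg.integrableOn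
      fun x => le_abs_self _
  rw [hsplitL, hsplitR, hIci, hIio]
  linarith

/-- Cutting the same mass `Θ` from the left of two densities does not increase the
`L¹` distance. -/
theorem stmt_6 (f g : ℝ → ℝ) (a Θ Vf Vg : ℝ)
    (hf_int : Integrable f) (hg_int : Integrable g)
    (hf_nonneg : ∀ x, 0 ≤ f x) (hg_nonneg : ∀ x, 0 ≤ g x)
    (hfa : ∫ x, f x = a) (hga : ∫ x, g x = a)
    (hΘ : 0 < Θ) (hΘa : Θ < a)
    (hVf : ∫ x in Set.Ici Vf, f x = a - Θ)
    (hVg : ∫ x in Set.Ici Vg, g x = a - Θ) :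
    ∫ x, |(Set.Ici Vf).indicator f x - (Set.Ici Vg).indicator g x|
      ≤ ∫ x, |f x - g x| := by
  rcases le_total Vf Vg with h | h
  · exact stmt_6_aux f g a Θ Vf Vg hf_int hg_int hf_nonneg hfa hga hVf hVg h
  · have := stmt_6_aux g f a Θ Vg Vf hg_int hf_int hg_nonneg hga hfa hVg hVf h
    calc ∫ x, |(Set.Ici Vf).indicator f x - (Set.Ici Vg).indicator g x|
        = ∫ x, |(Set.Ici Vg).indicator g x - (Set.Ici Vf).indicator f x| := by
          simp_rw [abs_sub_comm]
      _ ≤ ∫ x, |g x - f x| := this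
      _ = ∫ x, |f x - g x| := by simp_rw [abs_sub_comm]
end

section
/- Let μ, ν be positive finite measures on ℝ and 𝓘 a partition of ℝ into half-open intervals. Then sup_{r ∈ ℝ} |μ([r,∞)) - ν([r,∞))| ≤ Σ_{I ∈ 𝓘} |μ(I) - ν(I)| + sup_{I ∈ 𝓘} (μ(I) + ν(I)). -/
open MeasureTheory

/-- The mass transport distance is controlled by the partition semi-norm plus the
largest mass of a single partition interval. -/
theorem stmt_8 (μ ν : Measure ℝ) [IsFiniteMeasure μ] [IsFiniteMeasure ν]
    (h : ℝ) (hh : 0 < h) :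
    ∀ r : ℝ, |(μ (Set.Ici r)).toReal - (ν (Set.Ici r)).toReal|
      ≤ (∑' k : ℤ, |(μ (Set.Ico (k * h) ((k + 1) * h))).toReal
            - (ν (Set.Ico (k * h) ((k + 1) * h))).toReal|)
        + ⨆ k : ℤ, ((μ (Set.Ico (k * h) ((k + 1) * h))).toReal
            + (ν (Set.Ico (k * h) ((k + 1) * h))).toReal) := by
  intro r
  set I : ℤ → Set ℝ := fun k => Set.Ico ((k : ℝ) * h) (((k : ℝ) + 1) * h) with hI
  have hmeas : ∀ k : ℤ, MeasurableSet (I k) := fun k => measurableSet_Ico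
  have hdisj : Pairwise (Function.onFun Disjoint I) := by
    intro k l hkl
    simp only [Function.onFun, hI]
    rw [Set.Ico_disjoint_Ico]
    rcases lt_or_gt_of_ne hkl with hlt | hlt
    · have : ((k : ℝ) + 1) * h ≤ (l : ℝ) * h := by
        apply mul_le_mul_of_nonneg_right _ hh.le
        exact_mod_cast Int.add_one_le_of_lt hlt
      calc min (((k:ℝ)+1)*h) (((l:ℝ)+1)*h) ≤ ((k:ℝ)+1)*h := min_le_left _ _
        _ ≤ (l:ℝ)*h := this
        _ ≤ max ((k:ℝ)*h) ((l:ℝ)*h) := le_max_right _ _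
    · have : ((l : ℝ) + 1) * h ≤ (k : ℝ) * h := by
        apply mul_le_mul_of_nonneg_right _ hh.le
        exact_mod_cast Int.add_one_le_of_lt hlt
      calc min (((k:ℝ)+1)*h) (((l:ℝ)+1)*h) ≤ ((l:ℝ)+1)*h := min_le_right _ _
        _ ≤ (k:ℝ)*h := this
        _ ≤ max ((k:ℝ)*h) ((l:ℝ)*h) := le_max_left _ _
  have Smμ : Summable fun k : ℤ => (μ (I k)).toReal := by
    apply ENNReal.summable_toReal
    rw [← measure_iUnion hdisj hmeas]
    exact measure_ne_top _ _
  have Smν : Summable fun k : ℤ => (ν (I k)).toReal := by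
    apply ENNReal.summable_toReal
    rw [← measure_iUnion hdisj hmeas]
    exact measure_ne_top _ _
  have Sdiff : Summable fun k : ℤ => |(μ (I k)).toReal - (ν (I k)).toReal| :=
    (Smμ.sub Smν).abs
  -- the key index
  set k₀ : ℤ := ⌈r / h⌉ with hk₀
  have hr1 : r ≤ (k₀ : ℝ) * h := by
    rw [← div_le_iff₀ hh]; exact Int.le_ceil _
  have hr2 : ((k₀ : ℝ) - 1) * h ≤ r := by
    rw [← le_div_iff₀ hh, sub_le_iff_le_add]
    exact (Int.ceil_lt_add_one _).le
  set c : ℝ := (k₀ : ℝ) * h with hc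
  -- decompose Ici r
  have hsplitμ : (μ (Set.Ici r)).toReal
      = (μ (Set.Ico r c)).toReal + (μ (Set.Ici c)).toReal := by
    rw [← ENNReal.toReal_add (measure_ne_top _ _) (measure_ne_top _ _),
      ← measure_union ((Set.Iio_disjoint_Ici le_rfl).mono_left Set.Ico_subset_Iio_self)
        measurableSet_Ici,
      Set.Ico_union_Ici_eq_Ici hr1]
  have hsplitν : (ν (Set.Ici r)).toReal
      = (ν (Set.Ico r c)).toReal + (ν (Set.Ici c)).toReal := by
    rw [← ENNReal.toReal_add (measure_ne_top _ _) (measure_ne_top _ _),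
      ← measure_union ((Set.Iio_disjoint_Ici le_rfl).mono_left Set.Ico_subset_Iio_self)
        measurableSet_Ici,
      Set.Ico_union_Ici_eq_Ici hr1]
  -- tail union
  have hU : Set.Ici c = ⋃ n : ℕ, I (k₀ + n) := by
    ext x
    simp only [Set.mem_Ici, Set.mem_iUnion, hI, Set.mem_Ico]
    constructor
    · intro hx
      set m : ℤ := ⌊x / h⌋ with hm
      have hm1 : (m : ℝ) * h ≤ x := by
        rw [← le_div_iff₀ hh]; exact Int.floor_le _
      have hm2 : x < ((m : ℝ) + 1) * h := by
        have := Int.lt_floor_add_one (x / h)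
        rw [← div_lt_iff₀ hh]
        push_cast
        exact_mod_cast this
      have hk₀m : k₀ ≤ m := by
        rw [hm]
        apply Int.le_floor.mpr
        rw [le_div_iff₀ hh]
        exact hx
      refine ⟨(m - k₀).toNat, ?_, ?_⟩
      · push_cast [Int.toNat_of_nonneg (sub_nonneg.mpr hk₀m)]
        linarith
      · push_cast [Int.toNat_of_nonneg (sub_nonneg.mpr hk₀m)]
        linarith
    · rintro ⟨n, hn1, hn2⟩
      have : c ≤ ((k₀ : ℝ) + n) * h := by
        rw [hc]
        apply mul_le_mul_of_nonneg_right _ hh.le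
        have : (0:ℝ) ≤ n := n.cast_nonneg
        linarith
      calc c ≤ ((k₀ : ℝ) + n) * h := this
        _ ≤ x := by exact_mod_cast hn1
  have hinj : Function.Injective fun n : ℕ => k₀ + (n : ℤ) := by
    intro a b hab
    simpa using hab
  have hPD : Pairwise (Function.onFun Disjoint fun n : ℕ => I (k₀ + n)) := by
    intro a b hab
    exact hdisj (by simpa using fun hc' => hab (hinj hc'))
  have htailμ : (μ (Set.Ici c)).toReal = ∑' n : ℕ, (μ (I (k₀ + n))).toReal := by
    rw [hU, measure_iUnion hPD fun n => hmeas _, ENNReal.tsum_toReal_eq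
      fun n => measure_ne_top _ _]
  have htailν : (ν (Set.Ici c)).toReal = ∑' n : ℕ, (ν (I (k₀ + n))).toReal := by
    rw [hU, measure_iUnion hPD fun n => hmeas _, ENNReal.tsum_toReal_eq
      fun n => measure_ne_top _ _]
  have Sμn : Summable fun n : ℕ => (μ (I (k₀ + n))).toReal := Smμ.comp_injective hinj
  have Sνn : Summable fun n : ℕ => (ν (I (k₀ + n))).toReal := Smν.comp_injective hinj
  -- bound on the tail difference
  have htail : |(μ (Set.Ici c)).toReal - (ν (Set.Ici c)).toReal|
      ≤ ∑' k : ℤ, |(μ (I k)).toReal - (ν (I k)).toReal| := by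
    rw [htailμ, htailν, ← Summable.tsum_sub Sμn Sνn]
    calc |∑' n : ℕ, ((μ (I (k₀ + n))).toReal - (ν (I (k₀ + n))).toReal)|
        ≤ ∑' n : ℕ, |(μ (I (k₀ + n))).toReal - (ν (I (k₀ + n))).toReal| := by
          have := norm_tsum_le_tsum_norm
            (f := fun n : ℕ => (μ (I (k₀ + n))).toReal - (ν (I (k₀ + n))).toReal)
            (by simpa [Real.norm_eq_abs] using (Sμn.sub Sνn).abs)
          simpa [Real.norm_eq_abs] using this
      _ ≤ ∑' k : ℤ, |(μ (I k)).toReal - (ν (I k)).toReal| := by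
          exact Summable.tsum_le_tsum_of_inj (fun n : ℕ => k₀ + (n : ℤ)) hinj
            (fun c' _ => abs_nonneg _) (fun n => le_rfl) (Sμn.sub Sνn).abs Sdiff
  -- bound on the boundary part
  have hbdd : BddAbove (Set.range fun k : ℤ => (μ (I k)).toReal + (ν (I k)).toReal) := by
    refine ⟨(μ Set.univ).toReal + (ν Set.univ).toReal, ?_⟩
    rintro x ⟨k, rfl⟩
    exact add_le_add
      (ENNReal.toReal_mono (measure_ne_top _ _) (measure_mono (Set.subset_univ _)))
      (ENNReal.toReal_mono (measure_ne_top _ _) (measure_mono (Set.subset_univ _)))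
  have hsub : Set.Ico r c ⊆ I (k₀ - 1) := by
    apply Set.Ico_subset_Ico _ _
    · push_cast; linarith
    · push_cast [hc]; ring_nf; exact le_rfl
  have hbound : (μ (Set.Ico r c)).toReal + (ν (Set.Ico r c)).toReal
      ≤ ⨆ k : ℤ, ((μ (I k)).toReal + (ν (I k)).toReal) := by
    refine le_trans ?_ (le_ciSup hbdd (k₀ - 1))
    exact add_le_add
      (ENNReal.toReal_mono (measure_ne_top _ _) (measure_mono hsub))
      (ENNReal.toReal_mono (measure_ne_top _ _) (measure_mono hsub))
  calc |(μ (Set.Ici r)).toReal - (ν (Set.Ici r)).toReal|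
      = |((μ (Set.Ici c)).toReal - (ν (Set.Ici c)).toReal)
          + ((μ (Set.Ico r c)).toReal - (ν (Set.Ico r c)).toReal)| := by
        rw [hsplitμ, hsplitν]; ring_nf
    _ ≤ |(μ (Set.Ici c)).toReal - (ν (Set.Ici c)).toReal|
          + |(μ (Set.Ico r c)).toReal - (ν (Set.Ico r c)).toReal| := abs_add_le _ _
    _ ≤ (∑' k : ℤ, |(μ (I k)).toReal - (ν (I k)).toReal|)
          + ((μ (Set.Ico r c)).toReal + (ν (Set.Ico r c)).toReal) := by
        gcongr
        have h1 : (0:ℝ) ≤ (μ (Set.Ico r c)).toReal := ENNReal.toReal_nonneg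
        have h2 : (0:ℝ) ≤ (ν (Set.Ico r c)).toReal := ENNReal.toReal_nonneg
        rw [abs_le]
        constructor <;> linarith
    _ ≤ (∑' k : ℤ, |(μ (I k)).toReal - (ν (I k)).toReal|)
          + ⨆ k : ℤ, ((μ (I k)).toReal + (ν (I k)).toReal) := by
        gcongr
end
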